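/- arXiv:2101.03956 — 6 statements merged into one kernel-verified Lean document; each statement's English description precedes it below -/
import Mathlib

section
/- Let X be a real Hilbert space, u ∈ X, and let X^δ ⊆ X^{ubar} be closed subspaces. Let u_δ and u_{ubar} denote the orthogonal projections (best approximations) of u onto X^δ and X^{ubar} respectively. Suppose there is a constant ζ < 1 with ‖u − u_{ubar}‖ ≤ ζ‖u − u_δ‖ (saturation). If w ∈ X^δ and v ∈ X^{ubar} satisfy ‖u_{ubar} − v‖ ≤ ρ‖u_{ubar} − w‖ for some ρ ≤ 1, then ‖u − v‖ ≤ sqrt(ζ² + ρ²(1 − ζ²)) · ‖u − w‖. -/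
/-!
Since `u - u_ubar ⊥ X^ubar` and `v, w ∈ X^ubar`, Pythagoras gives
`‖u - v‖² = ‖u - u_ubar‖² + ‖u_ubar - v‖²` and likewise for `w`. With `a = ‖u - u_ubar‖²`,
`‖u - v‖² ≤ a + ρ² (‖u - w‖² - a) = (1 - ρ²) a + ρ² ‖u - w‖²`, and saturation together with
`‖u - u_δ‖ ≤ ‖u - w‖` bounds `a` by `ζ² ‖u - w‖²`.
-/

open RealInnerProductSpace

section

variable {X : Type*} [NormedAddCommGroup X] [InnerProductSpace ℝ X]

theorem norm_sub_sq_eq_of_inner_eq_zero (K : Submodule ℝ X) {u p z : X} (hp : p ∈ K)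
    (hz : z ∈ K) (horth : ∀ y ∈ K, ⟪u - p, y⟫ = 0) :
    ‖u - z‖ ^ 2 = ‖u - p‖ ^ 2 + ‖p - z‖ ^ 2 := by
  have h := norm_add_sq_eq_norm_sq_add_norm_sq_real (horth _ (K.sub_mem hp hz))
  rw [sub_add_sub_cancel] at h
  simpa only [sq] using h

theorem norm_sub_sq_le_of_inner_eq_zero (K : Submodule ℝ X) {u p v w : X} (hp : p ∈ K)
    (hv : v ∈ K) (hw : w ∈ K) (horth : ∀ y ∈ K, ⟪u - p, y⟫ = 0) {ζ ρ : ℝ} (hρ0 : 0 ≤ ρ)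
    (hρ1 : ρ ≤ 1) (hsat : ‖u - p‖ ≤ ζ * ‖u - w‖) (hvw : ‖p - v‖ ≤ ρ * ‖p - w‖) :
    ‖u - v‖ ^ 2 ≤ (ζ ^ 2 + ρ ^ 2 * (1 - ζ ^ 2)) * ‖u - w‖ ^ 2 := by
  have hv_pyth := norm_sub_sq_eq_of_inner_eq_zero K hp hv horth
  have hw_pyth := norm_sub_sq_eq_of_inner_eq_zero K hp hw horth
  have hsat_sq : ‖u - p‖ ^ 2 ≤ ζ ^ 2 * ‖u - w‖ ^ 2 := by
    rw [← mul_pow]; exact pow_le_pow_left₀ (norm_nonneg _) hsat 2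
  have hvw_sq : ‖p - v‖ ^ 2 ≤ ρ ^ 2 * ‖p - w‖ ^ 2 := by
    rw [← mul_pow]; exact pow_le_pow_left₀ (norm_nonneg _) hvw 2
  have hρ_sq : ρ ^ 2 ≤ 1 := pow_le_one₀ hρ0 hρ1
  nlinarith [mul_le_mul_of_nonneg_left hsat_sq (sub_nonneg.mpr hρ_sq)]

theorem norm_sub_le_of_inner_eq_zero (K : Submodule ℝ X) {u p v w : X} (hp : p ∈ K)
    (hv : v ∈ K) (hw : w ∈ K) (horth : ∀ y ∈ K, ⟪u - p, y⟫ = 0) {ζ ρ : ℝ} (hρ0 : 0 ≤ ρ)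
    (hρ1 : ρ ≤ 1) (hsat : ‖u - p‖ ≤ ζ * ‖u - w‖) (hvw : ‖p - v‖ ≤ ρ * ‖p - w‖) :
    ‖u - v‖ ≤ Real.sqrt (ζ ^ 2 + ρ ^ 2 * (1 - ζ ^ 2)) * ‖u - w‖ := by
  have hsq := norm_sub_sq_le_of_inner_eq_zero K hp hv hw horth hρ0 hρ1 hsat hvw
  rw [← Real.sqrt_sq (norm_nonneg (u - w)), ← Real.sqrt_mul' _ (sq_nonneg _),
    Real.le_sqrt (norm_nonneg _) ((sq_nonneg _).trans hsq)]
  exact hsq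

end

theorem stmt_0_general {X : Type*} [NormedAddCommGroup X] [InnerProductSpace ℝ X]
    (Kd Kub : Submodule ℝ X) (hsub : Kd ≤ Kub)
    (u ud uub : X) (huub : uub ∈ Kub)
    (hbest_d : ∀ w ∈ Kd, ‖u - ud‖ ≤ ‖u - w‖)
    (horth : ∀ w ∈ Kub, ⟪u - uub, w⟫ = 0)
    (ζ ρ : ℝ) (hζ0 : 0 ≤ ζ) (hρ0 : 0 ≤ ρ) (hρ1 : ρ ≤ 1)
    (hsat : ‖u - uub‖ ≤ ζ * ‖u - ud‖)
    (w : X) (hw : w ∈ Kd) (v : X) (hv : v ∈ Kub)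
    (hvw : ‖uub - v‖ ≤ ρ * ‖uub - w‖) :
    ‖u - v‖ ≤ Real.sqrt (ζ ^ 2 + ρ ^ 2 * (1 - ζ ^ 2)) * ‖u - w‖ :=
  norm_sub_le_of_inner_eq_zero Kub huub hv (hsub hw) horth hρ0 hρ1
    (hsat.trans (mul_le_mul_of_nonneg_left (hbest_d w hw) hζ0)) hvw

theorem stmt_0 {X : Type*} [NormedAddCommGroup X] [InnerProductSpace ℝ X] [CompleteSpace X]
    (Kd Kub : Submodule ℝ X) (hclosed_d : IsClosed (Kd : Set X))
    (hclosed_ub : IsClosed (Kub : Set X)) (hsub : Kd ≤ Kub)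
    (u ud uub : X) (hud : ud ∈ Kd) (huub : uub ∈ Kub)
    (hbest_d : ∀ w ∈ Kd, ‖u - ud‖ ≤ ‖u - w‖)
    (horth : ∀ w ∈ Kub, ⟪u - uub, w⟫ = 0)
    (ζ ρ : ℝ) (hζ0 : 0 ≤ ζ) (hζ1 : ζ < 1) (hρ0 : 0 ≤ ρ) (hρ1 : ρ ≤ 1)
    (hsat : ‖u - uub‖ ≤ ζ * ‖u - ud‖)
    (w : X) (hw : w ∈ Kd) (v : X) (hv : v ∈ Kub)
    (hvw : ‖uub - v‖ ≤ ρ * ‖uub - w‖) :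
    ‖u - v‖ ≤ Real.sqrt (ζ ^ 2 + ρ ^ 2 * (1 - ζ ^ 2)) * ‖u - w‖ :=
  stmt_0_general Kd Kub hsub u ud uub huub hbest_d horth ζ ρ hζ0 hρ0 hρ1 hsat w hw v hv hvw
end

section
/- Let H be a real Hilbert space with energy inner product a(·,·) (bounded, symmetric, coercive) and associated norm ‖·‖_a. Let X^δ ⊆ X^{ubar} be finite-dimensional subspaces and let Θ = (θ_λ)_{λ∈J} be a finite family in X^{ubar} with X^δ + span Θ = X^{ubar}. Assume there exist 0 < m ≤ M such that for all z ∈ X^δ and all real coefficient vectors c: m²‖z + Σ_λ c_λ θ_λ‖_a² ≤ ‖z‖_a² + ‖c‖² ≤ M²‖z + Σ_λ c_λ θ_λ‖_a². Let u^{ubar} ∈ X^{ubar} solve a(u^{ubar}, v) = f(v) for all v ∈ X^{ubar}, let u^δ ∈ X^δ be its Galerkin approximation on X^δ, and let r = (f(θ_λ) − a(u^δ, θ_λ))_{λ∈J} be the residual vector. Then m‖r‖ ≤ ‖u^{ubar} − u^δ‖_a ≤ M‖r‖. -/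
/-!
Write `e = uub - ud` for the Galerkin error. Galerkin orthogonality makes `e` orthogonal to `Xd`
and turns the residual into `r l = ⟪e, θ l⟫`. Testing `e` against `∑ l, r l • θ l` and using the
lower stability bound gives `m ‖r‖ ≤ ‖e‖`. Decomposing `e = z + ∑ l, c l • θ l` with `z ∈ Xd`,
orthogonality gives `‖e‖² = ∑ l, c l * r l ≤ ‖c‖ ‖r‖`, and the upper stability bound
`‖c‖ ≤ M ‖e‖` gives `‖e‖ ≤ M ‖r‖`.
-/

open RealInnerProductSpace

theorem Submodule.exists_eq_add_sum_smul_of_mem_sup_span_range {E : Type*} [AddCommGroup E]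
    [Module ℝ E] {J : Type*} [Fintype J] {X : Submodule ℝ E} {θ : J → E} {e : E}
    (he : e ∈ X ⊔ Submodule.span ℝ (Set.range θ)) :
    ∃ z ∈ X, ∃ c : J → ℝ, e = z + ∑ l, c l • θ l := by
  obtain ⟨z, hz, y, hy, rfl⟩ := Submodule.mem_sup.mp he
  obtain ⟨c, rfl⟩ := (Submodule.mem_span_range_iff_exists_fun ℝ).mp hy
  exact ⟨z, hz, c, rfl⟩

section FrameBounds

variable {E : Type*} [NormedAddCommGroup E] [InnerProductSpace ℝ E] {J : Type*} [Fintype J]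
  (θ : J → E)

theorem inner_sum_smul_right (e : E) (c : J → ℝ) :
    ⟪e, ∑ l, c l • θ l⟫ = ∑ l, c l * ⟪e, θ l⟫ := by
  simp only [inner_sum, real_inner_smul_right]

theorem mul_sqrt_sum_inner_sq_le_norm {m : ℝ} (hm : 0 ≤ m)
    (hstab : ∀ c : J → ℝ, m ^ 2 * ‖∑ l, c l • θ l‖ ^ 2 ≤ ∑ l, c l ^ 2) (e : E) :
    m * √(∑ l, ⟪e, θ l⟫ ^ 2) ≤ ‖e‖ := by
  set R := √(∑ l, ⟪e, θ l⟫ ^ 2)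
  set v := ∑ l, ⟪e, θ l⟫ • θ l
  have hR : 0 ≤ R := Real.sqrt_nonneg _
  have hRsq : R ^ 2 = ⟪e, v⟫ := by
    rw [Real.sq_sqrt (by positivity), inner_sum_smul_right]
    simp only [sq]
  have hv : m * ‖v‖ ≤ R := by
    refine Real.le_sqrt_of_sq_le ?_
    simpa only [mul_pow] using hstab fun l ↦ ⟪e, θ l⟫
  have hRe : m * R ^ 2 ≤ ‖e‖ * R := by
    calc m * R ^ 2 ≤ m * (‖e‖ * ‖v‖) := by
          rw [hRsq]; exact mul_le_mul_of_nonneg_left (real_inner_le_norm e v) hm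
      _ = ‖e‖ * (m * ‖v‖) := by ring
      _ ≤ ‖e‖ * R := mul_le_mul_of_nonneg_left hv (norm_nonneg e)
  rcases hR.eq_or_lt with hR0 | hRpos
  · rw [← hR0, mul_zero]; exact norm_nonneg e
  · nlinarith

theorem norm_le_mul_sqrt_sum_inner_sq {M : ℝ} (hM : 0 ≤ M) {e z : E} {c : J → ℝ}
    (hdecomp : e = z + ∑ l, c l • θ l) (horth : ⟪e, z⟫ = 0)
    (hc : ∑ l, c l ^ 2 ≤ M ^ 2 * ‖e‖ ^ 2) :
    ‖e‖ ≤ M * √(∑ l, ⟪e, θ l⟫ ^ 2) := by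
  set R := √(∑ l, ⟪e, θ l⟫ ^ 2)
  have hc' : √(∑ l, c l ^ 2) ≤ M * ‖e‖ :=
    Real.sqrt_le_iff.mpr ⟨by positivity, by linarith⟩
  have he : ‖e‖ ^ 2 ≤ ‖e‖ * (M * R) := by
    calc ‖e‖ ^ 2 = ∑ l, c l * ⟪e, θ l⟫ := by
          rw [← real_inner_self_eq_norm_sq, ← inner_sum_smul_right]
          nth_rewrite 2 [hdecomp]
          rw [inner_add_right, horth, zero_add]
      _ ≤ √(∑ l, c l ^ 2) * R := Real.sum_mul_le_sqrt_mul_sqrt _ _ _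
      _ ≤ M * ‖e‖ * R := mul_le_mul_of_nonneg_right hc' (Real.sqrt_nonneg _)
      _ = ‖e‖ * (M * R) := by ring
  have hMR : 0 ≤ M * R := mul_nonneg hM (Real.sqrt_nonneg _)
  nlinarith [norm_nonneg e]

end FrameBounds

theorem stmt_5_general {E : Type*} [NormedAddCommGroup E] [InnerProductSpace ℝ E]
    (Xd Xub : Submodule ℝ E) (hsub : Xd ≤ Xub)
    {J : Type*} [Fintype J] (θ : J → E) (hθ : ∀ l, θ l ∈ Xub)
    (hspan : Xd ⊔ Submodule.span ℝ (Set.range θ) = Xub)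
    (m M : ℝ) (hm : 0 < m) (hmM : m ≤ M)
    (hstab : ∀ z ∈ Xd, ∀ c : J → ℝ,
      m ^ 2 * ‖z + ∑ l, c l • θ l‖ ^ 2 ≤ ‖z‖ ^ 2 + ∑ l, (c l) ^ 2 ∧
      ‖z‖ ^ 2 + ∑ l, (c l) ^ 2 ≤ M ^ 2 * ‖z + ∑ l, c l • θ l‖ ^ 2)
    (f : E →ₗ[ℝ] ℝ)
    (uub : E) (huub : uub ∈ Xub) (hGub : ∀ v ∈ Xub, ⟪uub, v⟫ = f v)
    (ud : E) (hud : ud ∈ Xd) (hGd : ∀ v ∈ Xd, ⟪ud, v⟫ = f v)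
    (r : J → ℝ) (hr : ∀ l, r l = f (θ l) - ⟪ud, θ l⟫) :
    m * Real.sqrt (∑ l, (r l) ^ 2) ≤ ‖uub - ud‖ ∧
      ‖uub - ud‖ ≤ M * Real.sqrt (∑ l, (r l) ^ 2) := by
  have hresidual : r = fun l ↦ ⟪uub - ud, θ l⟫ := funext fun l ↦ by
    rw [hr l, ← hGub (θ l) (hθ l), inner_sub_left]
  have horth : ∀ z ∈ Xd, ⟪uub - ud, z⟫ = 0 := fun z hz ↦ by
    rw [inner_sub_left, hGub z (hsub hz), hGd z hz, sub_self]
  have herr : uub - ud ∈ Xd ⊔ Submodule.span ℝ (Set.range θ) :=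
    hspan ▸ Xub.sub_mem huub (hsub hud)
  obtain ⟨z, hz, c, hdecomp⟩ := Submodule.exists_eq_add_sum_smul_of_mem_sup_span_range herr
  subst hresidual
  refine ⟨mul_sqrt_sum_inner_sq_le_norm θ hm.le (fun c ↦ ?_) _,
    norm_le_mul_sqrt_sum_inner_sq θ (hm.le.trans hmM) hdecomp (horth z hz) ?_⟩
  · simpa using (hstab 0 Xd.zero_mem c).1
  · have := (hstab z hz c).2
    rw [← hdecomp] at this
    linarith [sq_nonneg ‖z‖]

/-- The energy space `E` carries the inner product `a(·,·)` with norm `‖·‖_a`. -/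
theorem stmt_5 {E : Type*} [NormedAddCommGroup E] [InnerProductSpace ℝ E]
    (Xd Xub : Submodule ℝ E) (hsub : Xd ≤ Xub)
    [FiniteDimensional ℝ Xd] [FiniteDimensional ℝ Xub]
    {J : Type*} [Fintype J] (θ : J → E) (hθ : ∀ l, θ l ∈ Xub)
    (hspan : Xd ⊔ Submodule.span ℝ (Set.range θ) = Xub)
    (m M : ℝ) (hm : 0 < m) (hmM : m ≤ M)
    (hstab : ∀ z ∈ Xd, ∀ c : J → ℝ,
      m ^ 2 * ‖z + ∑ l, c l • θ l‖ ^ 2 ≤ ‖z‖ ^ 2 + ∑ l, (c l) ^ 2 ∧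
      ‖z‖ ^ 2 + ∑ l, (c l) ^ 2 ≤ M ^ 2 * ‖z + ∑ l, c l • θ l‖ ^ 2)
    (f : E →ₗ[ℝ] ℝ)
    (uub : E) (huub : uub ∈ Xub) (hGub : ∀ v ∈ Xub, ⟪uub, v⟫ = f v)
    (ud : E) (hud : ud ∈ Xd) (hGd : ∀ v ∈ Xd, ⟪ud, v⟫ = f v)
    (r : J → ℝ) (hr : ∀ l, r l = f (θ l) - ⟪ud, θ l⟫) :
    m * Real.sqrt (∑ l, (r l) ^ 2) ≤ ‖uub - ud‖ ∧
      ‖uub - ud‖ ≤ M * Real.sqrt (∑ l, (r l) ^ 2) :=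
  stmt_5_general Xd Xub hsub θ hθ hspan m M hm hmM hstab f uub huub hGub ud hud hGd r hr
end

section
/- In the setting of the stable collection Θ and Galerkin solutions u^{ubar} ∈ X^{ubar}, u^δ ∈ X^δ with residual vector r = (f(θ_λ) − a(u^δ, θ_λ))_{λ∈J}: if J' ⊆ J satisfies ‖r|_{J'}‖ ≥ ϑ‖r‖ for some ϑ ∈ (0,1], and X^{δ̃} is a subspace with X^δ + span{θ_λ : λ ∈ J'} ⊆ X^{δ̃} ⊆ X^{ubar}, then the Galerkin solution u^{δ̃} on X^{δ̃} satisfies ‖u^{ubar} − u^{δ̃}‖_a ≤ sqrt(1 − (m/M · ϑ)²) · ‖u^{ubar} − u^δ‖_a. -/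
/-!
Write `u = u^{ubar}`, `e = u - u^δ` and `d = u^{δ̃} - u^δ`. Galerkin orthogonality gives
`‖u - u^{δ̃}‖² = ‖e‖² - ‖d‖²`, so it suffices to show `(m/M · ϑ)² ‖e‖² ≤ ‖d‖²`. The residual
components are `r_λ = ⟪e, θ_λ⟫` for all `λ`, and `r_λ = ⟪d, θ_λ⟫` for `λ ∈ J'`. Testing `e`
against its stable decomposition `z + ∑ c_λ θ_λ`, whose `X^δ`-part it is orthogonal to, gives
`‖e‖² = ∑ c_λ r_λ ≤ M ‖e‖ ‖r‖`; testing `d` against `∑_{λ ∈ J'} r_λ θ_λ` gives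
`m ‖r|_{J'}‖ ≤ ‖d‖`. The bulk criterion `ϑ ‖r‖ ≤ ‖r|_{J'}‖` links the two bounds.
-/

open RealInnerProductSpace

section Galerkin

variable {E : Type*} [NormedAddCommGroup E] [InnerProductSpace ℝ E]
  {f : E →ₗ[ℝ] ℝ} {V W : Submodule ℝ E} {u w v : E}

theorem inner_sub_of_galerkin (hu : ∀ v ∈ V, ⟪u, v⟫ = f v) (hv : v ∈ V) (w : E) :
    ⟪u - w, v⟫ = f v - ⟪w, v⟫ := by
  rw [inner_sub_left, hu v hv]

theorem inner_sub_eq_zero_of_galerkin (hWV : W ≤ V) (hu : ∀ v ∈ V, ⟪u, v⟫ = f v)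
    (hw : ∀ v ∈ W, ⟪w, v⟫ = f v) (hv : v ∈ W) : ⟪u - w, v⟫ = 0 := by
  rw [inner_sub_of_galerkin hu (hWV hv), hw v hv, sub_self]

theorem norm_sub_sq_eq_of_galerkin (hWV : W ≤ V) (hu : ∀ v ∈ V, ⟪u, v⟫ = f v)
    (hw : ∀ v ∈ W, ⟪w, v⟫ = f v) (hwW : w ∈ W) {x : E} (hx : x ∈ W) :
    ‖u - x‖ ^ 2 = ‖u - w‖ ^ 2 + ‖w - x‖ ^ 2 := by
  have horth := inner_sub_eq_zero_of_galerkin hWV hu hw (W.sub_mem hwW hx)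
  rw [← sub_add_sub_cancel u w x, norm_add_sq_real, horth]
  ring

end Galerkin

section StableSplitting

variable {E : Type*} [NormedAddCommGroup E] [InnerProductSpace ℝ E]
  {J : Type*} [Fintype J] {θ : J → E}

theorem norm_sq_le_sq_mul_sum_inner_sq {X : Submodule ℝ E} {M : ℝ}
    (hstab : ∀ z ∈ X, ∀ c : J → ℝ, ‖z‖ ^ 2 + ∑ l, c l ^ 2 ≤ M ^ 2 * ‖z + ∑ l, c l • θ l‖ ^ 2)
    {e : E} (he : e ∈ X ⊔ Submodule.span ℝ (Set.range θ)) (horth : ∀ z ∈ X, ⟪e, z⟫ = 0) :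
    ‖e‖ ^ 2 ≤ M ^ 2 * ∑ l, ⟪e, θ l⟫ ^ 2 := by
  obtain ⟨z, hz, y, hy, hzy⟩ := Submodule.mem_sup.mp he
  obtain ⟨c, rfl⟩ := (Submodule.mem_span_range_iff_exists_fun ℝ).mp hy
  have hnorm : ‖e‖ ^ 2 = ∑ l, c l * ⟪e, θ l⟫ := by
    rw [← real_inner_self_eq_norm_sq]
    nth_rw 2 [← hzy]
    simp only [inner_add_right, inner_sum, real_inner_smul_right, horth z hz, zero_add]
  have hcoeff : ∑ l, c l ^ 2 ≤ M ^ 2 * ‖e‖ ^ 2 := by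
    rw [← hzy]
    exact le_of_add_le_of_nonneg_right (hstab z hz c) (sq_nonneg _)
  -- Cauchy–Schwarz in `ℝ^J`, then cancel one factor `‖e‖²`.
  have hsq : ‖e‖ ^ 2 * ‖e‖ ^ 2 ≤ (M ^ 2 * ∑ l, ⟪e, θ l⟫ ^ 2) * ‖e‖ ^ 2 := by
    calc ‖e‖ ^ 2 * ‖e‖ ^ 2 = (∑ l, c l * ⟪e, θ l⟫) ^ 2 := by rw [hnorm]; ring
      _ ≤ (∑ l, c l ^ 2) * ∑ l, ⟪e, θ l⟫ ^ 2 := Finset.sum_mul_sq_le_sq_mul_sq _ _ _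
      _ ≤ (M ^ 2 * ‖e‖ ^ 2) * ∑ l, ⟪e, θ l⟫ ^ 2 := by gcongr
      _ = (M ^ 2 * ∑ l, ⟪e, θ l⟫ ^ 2) * ‖e‖ ^ 2 := by ring
  have hrhs : 0 ≤ M ^ 2 * ∑ l, ⟪e, θ l⟫ ^ 2 := by positivity
  nlinarith [sq_nonneg ‖e‖]

theorem sq_mul_sum_inner_sq_le {m : ℝ}
    (hstab : ∀ c : J → ℝ, m ^ 2 * ‖∑ l, c l • θ l‖ ^ 2 ≤ ∑ l, c l ^ 2) (s : Finset J) (w : E) : m ^ 2 * ∑ l ∈ s, ⟪w, θ l⟫ ^ 2 ≤ ‖w‖ ^ 2 := by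
  classical
  set S := ∑ l ∈ s, ⟪w, θ l⟫ ^ 2
  set v := ∑ l ∈ s, ⟪w, θ l⟫ • θ l
  have hv : m ^ 2 * ‖v‖ ^ 2 ≤ S := by
    simpa [ite_smul, apply_ite (· ^ 2 : ℝ → ℝ), Finset.sum_ite_mem] using
      hstab fun l => if l ∈ s then ⟪w, θ l⟫ else 0
  have hinner : S = ⟪w, v⟫ := by
    simp only [S, v, inner_sum, real_inner_smul_right, sq]
  have hS : S ^ 2 ≤ ‖w‖ ^ 2 * ‖v‖ ^ 2 := by
    rw [hinner, ← mul_pow]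
    exact pow_le_pow_left₀ (by rw [← hinner]; positivity) (real_inner_le_norm w v) 2
  rcases (show 0 ≤ S by positivity).eq_or_lt with hS0 | hSpos
  · rw [← hS0, mul_zero]
    positivity
  · refine le_of_mul_le_mul_right ?_ hSpos
    calc m ^ 2 * S * S = m ^ 2 * S ^ 2 := by ring
      _ ≤ m ^ 2 * (‖w‖ ^ 2 * ‖v‖ ^ 2) := by gcongr
      _ = ‖w‖ ^ 2 * (m ^ 2 * ‖v‖ ^ 2) := by ring
      _ ≤ ‖w‖ ^ 2 * S := by gcongr

end StableSplitting

theorem le_sqrt_one_sub_sq_mul {a b c k : ℝ} (ha : 0 ≤ a)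
    (hpyth : a ^ 2 = c ^ 2 + b ^ 2) (hb : k ^ 2 * a ^ 2 ≤ b ^ 2) :
    c ≤ Real.sqrt (1 - k ^ 2) * a := by
  calc c ≤ Real.sqrt ((1 - k ^ 2) * a ^ 2) := Real.le_sqrt_of_sq_le (by nlinarith)
    _ = Real.sqrt (1 - k ^ 2) * a := by rw [Real.sqrt_mul' _ (sq_nonneg a), Real.sqrt_sq ha]

theorem stmt_6_general {E : Type*} [NormedAddCommGroup E] [InnerProductSpace ℝ E]
    (Xd Xdt Xub : Submodule ℝ E) (hsub : Xd ≤ Xub)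
    {J : Type*} [Fintype J] (θ : J → E) (hθ : ∀ l, θ l ∈ Xub)
    (hspan : Xd ⊔ Submodule.span ℝ (Set.range θ) = Xub)
    (m M : ℝ)
    (hstab : ∀ z ∈ Xd, ∀ c : J → ℝ,
      m ^ 2 * ‖z + ∑ l, c l • θ l‖ ^ 2 ≤ ‖z‖ ^ 2 + ∑ l, (c l) ^ 2 ∧
      ‖z‖ ^ 2 + ∑ l, (c l) ^ 2 ≤ M ^ 2 * ‖z + ∑ l, c l • θ l‖ ^ 2)
    (f : E →ₗ[ℝ] ℝ)
    (uub : E) (huub : uub ∈ Xub) (hGub : ∀ v ∈ Xub, ⟪uub, v⟫ = f v)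
    (ud : E) (hud : ud ∈ Xd) (hGd : ∀ v ∈ Xd, ⟪ud, v⟫ = f v)
    (r : J → ℝ) (hr : ∀ l, r l = f (θ l) - ⟪ud, θ l⟫)
    (ϑ : ℝ) (hϑ0 : 0 < ϑ)
    (J' : Finset J)
    (hmark : ϑ * Real.sqrt (∑ l, (r l) ^ 2) ≤ Real.sqrt (∑ l ∈ J', (r l) ^ 2))
    (hXdt_low : Xd ≤ Xdt) (hXdt_up : Xdt ≤ Xub) (hθJ' : ∀ l ∈ J', θ l ∈ Xdt)
    (udt : E) (hudt : udt ∈ Xdt) (hGdt : ∀ v ∈ Xdt, ⟪udt, v⟫ = f v) :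
    ‖uub - udt‖ ≤ Real.sqrt (1 - (m / M * ϑ) ^ 2) * ‖uub - ud‖ := by
  have hres : ∀ l, ⟪uub - ud, θ l⟫ = r l := fun l => by
    rw [inner_sub_of_galerkin hGub (hθ l), hr]
  have hres' : ∀ l ∈ J', ⟪udt - ud, θ l⟫ = r l := fun l hl => by
    rw [inner_sub_of_galerkin hGdt (hθJ' l hl), hr]
  have hupper : ‖uub - ud‖ ^ 2 ≤ M ^ 2 * ∑ l, r l ^ 2 := by
    simpa only [hres] using norm_sq_le_sq_mul_sum_inner_sq (fun z hz c => (hstab z hz c).2)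
      (hspan ▸ Xub.sub_mem huub (hsub hud))
      fun z hz => inner_sub_eq_zero_of_galerkin hsub hGub hGd hz
  have hlower : m ^ 2 * ∑ l ∈ J', r l ^ 2 ≤ ‖udt - ud‖ ^ 2 := by
    rw [← Finset.sum_congr rfl fun l hl => congrArg (· ^ 2) (hres' l hl)]
    exact sq_mul_sum_inner_sq_le (fun c => by simpa using (hstab 0 Xd.zero_mem c).1) J' _
  have hmark_sq : ϑ ^ 2 * ∑ l, r l ^ 2 ≤ ∑ l ∈ J', r l ^ 2 := by
    have := pow_le_pow_left₀ (by positivity) hmark 2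
    rwa [mul_pow, Real.sq_sqrt (by positivity), Real.sq_sqrt (by positivity)] at this
  refine le_sqrt_one_sub_sq_mul (norm_nonneg _)
    (norm_sub_sq_eq_of_galerkin hXdt_up hGub hGdt hudt (hXdt_low hud)) ?_
  calc (m / M * ϑ) ^ 2 * ‖uub - ud‖ ^ 2 = (m * ϑ) ^ 2 * (‖uub - ud‖ ^ 2 / M ^ 2) := by ring
    _ ≤ (m * ϑ) ^ 2 * ∑ l, r l ^ 2 := by
        gcongr
        exact div_le_of_le_mul₀ (sq_nonneg M) (by positivity) (by linarith)
    _ = m ^ 2 * (ϑ ^ 2 * ∑ l, r l ^ 2) := by ring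
    _ ≤ m ^ 2 * ∑ l ∈ J', r l ^ 2 := by gcongr
    _ ≤ ‖udt - ud‖ ^ 2 := hlower

theorem stmt_6 {E : Type*} [NormedAddCommGroup E] [InnerProductSpace ℝ E]
    (Xd Xdt Xub : Submodule ℝ E) (hsub : Xd ≤ Xub) [FiniteDimensional ℝ Xub]
    {J : Type*} [Fintype J] (θ : J → E) (hθ : ∀ l, θ l ∈ Xub)
    (hspan : Xd ⊔ Submodule.span ℝ (Set.range θ) = Xub)
    (m M : ℝ) (hm : 0 < m) (hmM : m ≤ M)
    (hstab : ∀ z ∈ Xd, ∀ c : J → ℝ,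
      m ^ 2 * ‖z + ∑ l, c l • θ l‖ ^ 2 ≤ ‖z‖ ^ 2 + ∑ l, (c l) ^ 2 ∧
      ‖z‖ ^ 2 + ∑ l, (c l) ^ 2 ≤ M ^ 2 * ‖z + ∑ l, c l • θ l‖ ^ 2)
    (f : E →ₗ[ℝ] ℝ)
    (uub : E) (huub : uub ∈ Xub) (hGub : ∀ v ∈ Xub, ⟪uub, v⟫ = f v)
    (ud : E) (hud : ud ∈ Xd) (hGd : ∀ v ∈ Xd, ⟪ud, v⟫ = f v)
    (r : J → ℝ) (hr : ∀ l, r l = f (θ l) - ⟪ud, θ l⟫)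
    (ϑ : ℝ) (hϑ0 : 0 < ϑ) (hϑ1 : ϑ ≤ 1)
    (J' : Finset J)
    (hmark : ϑ * Real.sqrt (∑ l, (r l) ^ 2) ≤ Real.sqrt (∑ l ∈ J', (r l) ^ 2))
    (hXdt_low : Xd ≤ Xdt) (hXdt_up : Xdt ≤ Xub) (hθJ' : ∀ l ∈ J', θ l ∈ Xdt)
    (udt : E) (hudt : udt ∈ Xdt) (hGdt : ∀ v ∈ Xdt, ⟪udt, v⟫ = f v) :
    ‖uub - udt‖ ≤ Real.sqrt (1 - (m / M * ϑ) ^ 2) * ‖uub - ud‖ :=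
  stmt_6_general Xd Xdt Xub hsub θ hθ hspan m M hstab f uub huub hGub ud hud hGd r hr ϑ hϑ0 J' hmark
    hXdt_low hXdt_up hθJ' udt hudt hGdt
end

section
/- Let X be a real Hilbert space, u ∈ X, X^δ ⊆ X^{ubar} closed subspaces with best approximations u_δ, u_{ubar} of u and saturation ‖u − u_{ubar}‖ ≤ ζ‖u − u_δ‖, ζ < 1. Let u* ∈ X^{ubar} and u*_δ ∈ X^δ (approximate Galerkin solutions) satisfy ‖u − u*‖ ≤ κ‖u − u_{ubar}‖ and the assumption that u*_δ ∈ X^δ. Then: (a) ‖u_{ubar} − u*_δ‖ ≤ ‖u − u*_δ‖ ≤ (1 − ζ²)^{−1/2}‖u_{ubar} − u*_δ‖; (b) | ‖u_{ubar} − u*_δ‖ − ‖u* − u*_δ‖ | ≤ ζ·sqrt(κ² − 1)·‖u − u*_δ‖. -/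
/-!
Since `u - uub` is orthogonal to `Kub ⊇ Kd`, Pythagoras gives
`‖u - v‖² = ‖u - uub‖² + ‖uub - v‖²` for every `v ∈ Kub`. For `v = ustard` saturation bounds the
first summand by `ζ²‖u - ustard‖²`, which yields (a). For `v = ustar` the quasi-optimality
`‖u - ustar‖ ≤ κ‖u - uub‖` bounds `‖uub - ustar‖` by `√(κ² - 1)‖u - uub‖`, and (b) follows from
the reverse triangle inequality and saturation once more.
-/

open RealInnerProductSpace

section Orthogonal

variable {X : Type*} [NormedAddCommGroup X] [InnerProductSpace ℝ X]
  {K : Submodule ℝ X} {u p v : X}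

theorem norm_sub_sq_eq_of_forall_inner_eq_zero (hp : p ∈ K)
    (horth : ∀ w ∈ K, ⟪u - p, w⟫ = 0) (hv : v ∈ K) :
    ‖u - v‖ ^ 2 = ‖u - p‖ ^ 2 + ‖p - v‖ ^ 2 := by
  have hinner := horth (p - v) (K.sub_mem hp hv)
  rw [← sub_add_sub_cancel u p v, norm_add_sq_real, hinner]
  ring

theorem norm_sub_le_of_forall_inner_eq_zero (hp : p ∈ K)
    (horth : ∀ w ∈ K, ⟪u - p, w⟫ = 0) (hv : v ∈ K) :
    ‖p - v‖ ≤ ‖u - v‖ := by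
  have hpyth := norm_sub_sq_eq_of_forall_inner_eq_zero hp horth hv
  exact pow_le_pow_iff_left₀ (norm_nonneg _) (norm_nonneg _) two_ne_zero |>.mp
    (by nlinarith [sq_nonneg ‖u - p‖])

theorem sqrt_one_sub_sq_mul_norm_sub_le {ζ : ℝ} (hp : p ∈ K)
    (horth : ∀ w ∈ K, ⟪u - p, w⟫ = 0) (hv : v ∈ K) (hsat : ‖u - p‖ ≤ ζ * ‖u - v‖) :
    √(1 - ζ ^ 2) * ‖u - v‖ ≤ ‖p - v‖ := by
  have hpyth := norm_sub_sq_eq_of_forall_inner_eq_zero hp horth hv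
  have hsat_sq : ‖u - p‖ ^ 2 ≤ (ζ * ‖u - v‖) ^ 2 := pow_le_pow_left₀ (norm_nonneg _) hsat 2
  rw [← Real.sqrt_sq (norm_nonneg (u - v)), ← Real.sqrt_mul' _ (sq_nonneg _),
    Real.sqrt_le_iff]
  exact ⟨norm_nonneg _, by nlinarith⟩

theorem norm_sub_le_sqrt_sq_sub_one_mul {κ : ℝ} (hp : p ∈ K)
    (horth : ∀ w ∈ K, ⟪u - p, w⟫ = 0) (hv : v ∈ K) (hκ : ‖u - v‖ ≤ κ * ‖u - p‖) :
    ‖p - v‖ ≤ √(κ ^ 2 - 1) * ‖u - p‖ := by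
  have hpyth := norm_sub_sq_eq_of_forall_inner_eq_zero hp horth hv
  have hκ_sq : ‖u - v‖ ^ 2 ≤ (κ * ‖u - p‖) ^ 2 := pow_le_pow_left₀ (norm_nonneg _) hκ 2
  rw [← Real.sqrt_sq (norm_nonneg (u - p)), ← Real.sqrt_mul' _ (sq_nonneg _),
    Real.le_sqrt (norm_nonneg _) (by nlinarith)]
  nlinarith

end Orthogonal

theorem Real.rpow_neg_one_div_two {x : ℝ} (hx : 0 ≤ x) : x ^ (-(1 : ℝ) / 2) = (√x)⁻¹ := by
  rw [Real.sqrt_eq_rpow, ← Real.rpow_neg hx]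
  norm_num

theorem stmt_9_general {X : Type*} [NormedAddCommGroup X] [InnerProductSpace ℝ X]
    (Kd Kub : Submodule ℝ X) (hsub : Kd ≤ Kub)
    (u uub : X) (huub : uub ∈ Kub)
    (horth : ∀ w ∈ Kub, ⟪u - uub, w⟫ = 0)
    (ζ : ℝ) (hζ0 : 0 ≤ ζ) (hζ1 : ζ < 1)
    (hsat : ∀ w ∈ Kd, ‖u - uub‖ ≤ ζ * ‖u - w‖)
    (κ : ℝ)
    (ustar : X) (hustar : ustar ∈ Kub) (hκbound : ‖u - ustar‖ ≤ κ * ‖u - uub‖)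
    (ustard : X) (hustard : ustard ∈ Kd) :
    (‖uub - ustard‖ ≤ ‖u - ustard‖ ∧
      ‖u - ustard‖ ≤ (1 - ζ ^ 2) ^ (-(1 : ℝ) / 2) * ‖uub - ustard‖) ∧
    |‖uub - ustard‖ - ‖ustar - ustard‖| ≤ ζ * Real.sqrt (κ ^ 2 - 1) * ‖u - ustard‖ := by
  have hustard' : ustard ∈ Kub := hsub hustard
  have hsat_d := hsat ustard hustard
  have hpos : 0 < 1 - ζ ^ 2 := by nlinarith
  refine ⟨⟨norm_sub_le_of_forall_inner_eq_zero huub horth hustard', ?_⟩, ?_⟩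
  · rw [Real.rpow_neg_one_div_two hpos.le, le_inv_mul_iff₀ (Real.sqrt_pos.mpr hpos)]
    exact sqrt_one_sub_sq_mul_norm_sub_le huub horth hustard' hsat_d
  · calc |‖uub - ustard‖ - ‖ustar - ustard‖|
        ≤ ‖uub - ustar‖ := by
          simpa only [sub_sub_sub_cancel_right] using
            abs_norm_sub_norm_le (uub - ustard) (ustar - ustard)
      _ ≤ √(κ ^ 2 - 1) * ‖u - uub‖ :=
          norm_sub_le_sqrt_sq_sub_one_mul huub horth hustar hκbound
      _ ≤ √(κ ^ 2 - 1) * (ζ * ‖u - ustard‖) := by gcongr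
      _ = ζ * √(κ ^ 2 - 1) * ‖u - ustard‖ := by ring

theorem stmt_9 {X : Type*} [NormedAddCommGroup X] [InnerProductSpace ℝ X] [CompleteSpace X]
    (Kd Kub : Submodule ℝ X) (hclosed_d : IsClosed (Kd : Set X))
    (hclosed_ub : IsClosed (Kub : Set X)) (hsub : Kd ≤ Kub)
    (u uub : X) (huub : uub ∈ Kub)
    (horth : ∀ w ∈ Kub, ⟪u - uub, w⟫ = 0)
    (ζ : ℝ) (hζ0 : 0 ≤ ζ) (hζ1 : ζ < 1)
    (hsat : ∀ w ∈ Kd, ‖u - uub‖ ≤ ζ * ‖u - w‖)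
    (κ : ℝ) (hκ : 1 ≤ κ)
    (ustar : X) (hustar : ustar ∈ Kub) (hκbound : ‖u - ustar‖ ≤ κ * ‖u - uub‖)
    (ustard : X) (hustard : ustard ∈ Kd) :
    (‖uub - ustard‖ ≤ ‖u - ustard‖ ∧
      ‖u - ustard‖ ≤ (1 - ζ ^ 2) ^ (-(1 : ℝ) / 2) * ‖uub - ustard‖) ∧
    |‖uub - ustard‖ - ‖ustar - ustard‖| ≤ ζ * Real.sqrt (κ ^ 2 - 1) * ‖u - ustard‖ :=
  stmt_9_general Kd Kub hsub u uub huub horth ζ hζ0 hζ1 hsat κ ustar hustar hκbound ustard hustard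
end

section
/- Let X be a real Hilbert space, X^δ ⊆ X^{ubar} ⊆ X closed subspaces, u ∈ X with best approximation u_{ubar} onto X^{ubar}, saturation ‖u − u_{ubar}‖ ≤ ζ‖u − v‖ for all v ∈ X^δ, ζ < 1. Let s be a positive semidefinite symmetric bilinear form on X with seminorm |·|ₛ satisfying (γ/√κ)‖x‖ ≤ |x|ₛ ≤ √κ‖x‖ for x ∈ X^{ubar} and |x|ₛ ≤ √κ‖x‖ for all x ∈ X, where κ ≥ 1 ≥ γ > 0. Let u** ∈ X^{ubar} satisfy s(u − u**, X^{ubar}) = 0 and ‖u − u**‖ ≤ (κ/γ)‖u − u_{ubar}‖. If ζκ < γ, then for every v ∈ X^δ: ((γ − ζκ)/√κ)·‖u − v‖ ≤ |u − v|ₛ ≤ sqrt(κ(ζ² + (1 + ζκ/γ)²))·‖u − v‖. -/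
/-!
Pythagoras for the form `s` splits `|u - v|ₛ²` into the Galerkin error `|u - u**|ₛ²` and
`|u** - v|ₛ²`, with `u** - v ∈ X^{ubar}`. The second term controls the estimate in both
directions, because on `X^{ubar}` the seminorm is equivalent to the norm, and
`‖u** - v‖` differs from `‖u - v‖` by at most `‖u - u**‖ ≤ (ζκ/γ)‖u - v‖`. The first term
is at most `|u - u_{ubar}|ₛ² ≤ κζ²‖u - v‖²`, again by Pythagoras.
-/

open RealInnerProductSpace

namespace LinearMap

section CommRing

variable {R M : Type*} [CommRing R] [AddCommGroup M] [Module R M] {s : M →ₗ[R] M →ₗ[R] R}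

theorem apply_add_add_of_apply_eq_zero (hsymm : ∀ x y, s x y = s y x) {x y : M}
    (hxy : s x y = 0) : s (x + y) (x + y) = s x x + s y y := by
  simp only [map_add, add_apply, hxy, ← hsymm x y]
  ring

theorem apply_sub_sub_eq_of_galerkin (hsymm : ∀ x y, s x y = s y x) {K : Submodule R M}
    {u ug w : M} (hug : ug ∈ K) (horth : ∀ w ∈ K, s (u - ug) w = 0) (hw : w ∈ K) :
    s (u - w) (u - w) = s (u - ug) (u - ug) + s (ug - w) (ug - w) := by
  rw [← apply_add_add_of_apply_eq_zero hsymm (horth _ (K.sub_mem hug hw)), sub_add_sub_cancel]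

end CommRing

section Real

variable {X : Type*} [SeminormedAddCommGroup X] [Module ℝ X] {s : X →ₗ[ℝ] X →ₗ[ℝ] ℝ}
  {K : Submodule ℝ X} {u ug w : X}

theorem mul_norm_le_sqrt_apply_of_galerkin (hsymm : ∀ x y, s x y = s y x)
    (hpos : ∀ x, 0 ≤ s x x) {c : ℝ} (hlow : ∀ x ∈ K, c * ‖x‖ ≤ √(s x x)) (hug : ug ∈ K)
    (horth : ∀ w ∈ K, s (u - ug) w = 0) (hw : w ∈ K) :
    c * ‖ug - w‖ ≤ √(s (u - w) (u - w)) := by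
  refine (hlow _ (K.sub_mem hug hw)).trans (Real.sqrt_le_sqrt ?_)
  rw [apply_sub_sub_eq_of_galerkin hsymm hug horth hw]
  exact le_add_of_nonneg_left (hpos _)

theorem apply_sub_sub_le_of_galerkin (hsymm : ∀ x y, s x y = s y x) (hpos : ∀ x, 0 ≤ s x x)
    {κ : ℝ} (hκ : 0 ≤ κ) (hup : ∀ x, √(s x x) ≤ √κ * ‖x‖) (hug : ug ∈ K)
    (horth : ∀ w ∈ K, s (u - ug) w = 0) {ub : X} (hub : ub ∈ K) (hw : w ∈ K) :
    s (u - w) (u - w) ≤ κ * (‖u - ub‖ ^ 2 + ‖ug - w‖ ^ 2) := by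
  have hsq (x : X) : s x x ≤ κ * ‖x‖ ^ 2 := by
    rw [← Real.sq_sqrt hκ, ← mul_pow]
    exact (Real.sqrt_le_iff.mp (hup x)).2
  have hgal : s (u - ug) (u - ug) ≤ s (u - ub) (u - ub) := by
    rw [apply_sub_sub_eq_of_galerkin hsymm hug horth hub]
    exact le_add_of_nonneg_right (hpos _)
  rw [apply_sub_sub_eq_of_galerkin hsymm hug horth hw, mul_add]
  exact add_le_add (hgal.trans (hsq _)) (hsq _)

end Real

end LinearMap

open LinearMap in
theorem stmt_11_general {X : Type*} [NormedAddCommGroup X] [InnerProductSpace ℝ X]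
    (Kd Kub : Submodule ℝ X) (hsub : Kd ≤ Kub)
    (u uub : X) (huub : uub ∈ Kub)
    (ζ : ℝ)
    (hsat : ∀ v ∈ Kd, ‖u - uub‖ ≤ ζ * ‖u - v‖)
    (s : X →ₗ[ℝ] X →ₗ[ℝ] ℝ)
    (hsymm : ∀ x y, s x y = s y x) (hpos : ∀ x, 0 ≤ s x x)
    (κ γ : ℝ) (hκ : 1 ≤ κ) (hγ0 : 0 < γ)
    (hlow : ∀ x ∈ Kub, (γ / Real.sqrt κ) * ‖x‖ ≤ Real.sqrt (s x x))
    (hup : ∀ x : X, Real.sqrt (s x x) ≤ Real.sqrt κ * ‖x‖)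
    (ustst : X) (hustst : ustst ∈ Kub)
    (hsorth : ∀ w ∈ Kub, s (u - ustst) w = 0)
    (hquasi : ‖u - ustst‖ ≤ (κ / γ) * ‖u - uub‖) :
    ∀ v ∈ Kd,
      ((γ - ζ * κ) / Real.sqrt κ) * ‖u - v‖ ≤ Real.sqrt (s (u - v) (u - v)) ∧
      Real.sqrt (s (u - v) (u - v)) ≤
        Real.sqrt (κ * (ζ ^ 2 + (1 + ζ * κ / γ) ^ 2)) * ‖u - v‖ := by
  intro v hv
  have hκ0 : 0 ≤ κ := by linarith
  have herr : ‖u - ustst‖ ≤ ζ * κ / γ * ‖u - v‖ := by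
    calc ‖u - ustst‖ ≤ κ / γ * ‖u - uub‖ := hquasi
      _ ≤ κ / γ * (ζ * ‖u - v‖) := by gcongr; exact hsat v hv
      _ = ζ * κ / γ * ‖u - v‖ := by ring
  have htri₁ := norm_sub_le_norm_sub_add_norm_sub u ustst v
  have htri₂ := norm_sub_le_norm_sub_add_norm_sub ustst u v
  rw [norm_sub_rev ustst u] at htri₂
  constructor
  · calc (γ - ζ * κ) / √κ * ‖u - v‖ = γ / √κ * ((1 - ζ * κ / γ) * ‖u - v‖) := by
          field_simp
      _ ≤ γ / √κ * ‖ustst - v‖ := by gcongr; linarith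
      _ ≤ √(s (u - v) (u - v)) :=
          mul_norm_le_sqrt_apply_of_galerkin hsymm hpos hlow hustst hsorth (hsub hv)
  · calc √(s (u - v) (u - v)) ≤ √(κ * (‖u - uub‖ ^ 2 + ‖ustst - v‖ ^ 2)) :=
          Real.sqrt_le_sqrt <|
            apply_sub_sub_le_of_galerkin hsymm hpos hκ0 hup hustst hsorth huub (hsub hv)
      _ ≤ √(κ * ((ζ * ‖u - v‖) ^ 2 + ((1 + ζ * κ / γ) * ‖u - v‖) ^ 2)) := by
          gcongr
          · exact hsat v hv
          · linarith
      _ = √(κ * (ζ ^ 2 + (1 + ζ * κ / γ) ^ 2) * ‖u - v‖ ^ 2) := by ring_nf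
      _ = √(κ * (ζ ^ 2 + (1 + ζ * κ / γ) ^ 2)) * ‖u - v‖ := by
          rw [Real.sqrt_mul' _ (sq_nonneg _), Real.sqrt_sq (norm_nonneg _)]

theorem stmt_11 {X : Type*} [NormedAddCommGroup X] [InnerProductSpace ℝ X] [CompleteSpace X]
    (Kd Kub : Submodule ℝ X) (hclosed_d : IsClosed (Kd : Set X))
    (hclosed_ub : IsClosed (Kub : Set X)) (hsub : Kd ≤ Kub)
    (u uub : X) (huub : uub ∈ Kub)
    (horth : ∀ w ∈ Kub, ⟪u - uub, w⟫ = 0)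
    (ζ : ℝ) (hζ0 : 0 ≤ ζ) (hζ1 : ζ < 1)
    (hsat : ∀ v ∈ Kd, ‖u - uub‖ ≤ ζ * ‖u - v‖)
    (s : X →ₗ[ℝ] X →ₗ[ℝ] ℝ)
    (hsymm : ∀ x y, s x y = s y x) (hpos : ∀ x, 0 ≤ s x x)
    (κ γ : ℝ) (hκ : 1 ≤ κ) (hγ0 : 0 < γ) (hγ1 : γ ≤ 1)
    (hlow : ∀ x ∈ Kub, (γ / Real.sqrt κ) * ‖x‖ ≤ Real.sqrt (s x x))
    (hup : ∀ x : X, Real.sqrt (s x x) ≤ Real.sqrt κ * ‖x‖)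
    (ustst : X) (hustst : ustst ∈ Kub)
    (hsorth : ∀ w ∈ Kub, s (u - ustst) w = 0)
    (hquasi : ‖u - ustst‖ ≤ (κ / γ) * ‖u - uub‖)
    (hζκγ : ζ * κ < γ) :
    ∀ v ∈ Kd,
      ((γ - ζ * κ) / Real.sqrt κ) * ‖u - v‖ ≤ Real.sqrt (s (u - v) (u - v)) ∧
      Real.sqrt (s (u - v) (u - v)) ≤
        Real.sqrt (κ * (ζ ^ 2 + (1 + ζ * κ / γ) ^ 2)) * ‖u - v‖ :=
  stmt_11_general Kd Kub hsub u uub huub ζ hsat s hsymm hpos κ γ hκ hγ0 hlow hup ustst hustst hsorth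
    hquasi
end

section
/- Let V be a finite-dimensional real inner product space with two bases related by a block-triangular change of basis: V = V₁ ⊕ V₂ (algebraic direct sum), with bases Φ₁ ∪ Φ₂ and Φ₁ ∪ Φ̂₂ where each φ̂ ∈ Φ̂₂ equals the corresponding φ ∈ Φ₂ plus a linear combination of elements of Φ₁ with coefficients bounded in absolute value by C, each φ̂ involving at most k elements of Φ₁, and each element of Φ₁ appearing in at most k of the φ̂'s. If Φ₁ ∪ Φ₂ is a Riesz system with constants A ≤ B (i.e. A‖c‖² ≤ ‖Σ c_i ψ_i‖² ≤ B‖c‖² for the normalized basis), then Φ₁ ∪ Φ̂₂ is also a Riesz system with constants depending only on A, B, C, k. -/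
/-! Write `ψᵢ ∈ Φ₁`, `φⱼ ∈ Φ₂`. Expanding the normalized new vectors `φ̂ⱼ / ‖φ̂ⱼ‖` in the old
normalized system, a coefficient vector `(c₁, c₂)` for the new system becomes `(c₁ + a c₂, s c₂)`
for the old one, with `aᵢⱼ = tⱼᵢ ‖ψᵢ‖ / ‖φ̂ⱼ‖` and `sⱼ = ‖φⱼ‖ / ‖φ̂ⱼ‖`. The old Riesz bounds
applied to `φ̂ⱼ` itself give `A ‖φⱼ‖² ≤ ‖φ̂ⱼ‖² ≤ B (1 + k C²) ‖φⱼ‖²`, so `s` is bounded above and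
below and the columns of `a` have squared norm at most `k C² / A`. Since `a` also has at most `k`
nonzero entries per row, Cauchy–Schwarz gives `‖a c₂‖² ≤ k · (k C² / A) ‖c₂‖²`. Hence this
triangular coefficient map and its inverse are bounded, and the Riesz bounds transfer. -/

open Finset

section RieszBounds

variable {V : Type*} [NormedAddCommGroup V] [NormedSpace ℝ V]
  {ι₁ ι₂ : Type*} [Fintype ι₁] [Fintype ι₂]

def HasRieszBounds (A B : ℝ) (u : ι₁ → V) (v : ι₂ → V) : Prop :=
  ∀ (c₁ : ι₁ → ℝ) (c₂ : ι₂ → ℝ),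
    A * (∑ i, c₁ i ^ 2 + ∑ j, c₂ j ^ 2) ≤ ‖(∑ i, c₁ i • u i) + ∑ j, c₂ j • v j‖ ^ 2 ∧
      ‖(∑ i, c₁ i • u i) + ∑ j, c₂ j • v j‖ ^ 2 ≤ B * (∑ i, c₁ i ^ 2 + ∑ j, c₂ j ^ 2)

theorem sum_sq_sum_mul_le_of_sparse {a : ι₁ → ι₂ → ℝ} {k : ℕ} {β : ℝ}
    (hrow : ∀ i, #{j | a i j ≠ 0} ≤ k) (hcol : ∀ j, ∑ i, a i j ^ 2 ≤ β) (x : ι₂ → ℝ) :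
    ∑ i, (∑ j, a i j * x j) ^ 2 ≤ k * β * ∑ j, x j ^ 2 := by
  have hrow_sq : ∀ i, (∑ j, a i j * x j) ^ 2 ≤ k * ∑ j, (a i j * x j) ^ 2 := by
    intro i
    calc (∑ j, a i j * x j) ^ 2 = (∑ j with a i j ≠ 0, a i j * x j) ^ 2 := by
          rw [sum_filter_of_ne fun j _ h => left_ne_zero_of_mul h]
      _ ≤ #{j | a i j ≠ 0} * ∑ j with a i j ≠ 0, (a i j * x j) ^ 2 := sq_sum_le_card_mul_sum_sq
      _ ≤ k * ∑ j, (a i j * x j) ^ 2 := by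
          gcongr
          · exact_mod_cast hrow i
          · exact filter_subset _ _
  calc ∑ i, (∑ j, a i j * x j) ^ 2 ≤ ∑ i, k * ∑ j, (a i j * x j) ^ 2 :=
        sum_le_sum fun i _ => hrow_sq i
    _ = k * ∑ j, (∑ i, a i j ^ 2) * x j ^ 2 := by
        rw [← mul_sum, sum_comm]
        simp_rw [mul_pow, sum_mul]
    _ ≤ k * ∑ j, β * x j ^ 2 := by gcongr with j; exact hcol j
    _ = k * β * ∑ j, x j ^ 2 := by rw [← mul_sum, mul_assoc]

theorem sum_sq_add_le (f g : ι₁ → ℝ) :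
    ∑ i, (f i + g i) ^ 2 ≤ 2 * ∑ i, f i ^ 2 + 2 * ∑ i, g i ^ 2 := by
  rw [mul_sum, mul_sum, ← sum_add_distrib]
  exact sum_le_sum fun i _ => (add_sq_le).trans_eq (mul_add _ _ _)

namespace HasRieszBounds

variable {A B : ℝ} {u : ι₁ → V} {v : ι₂ → V}

theorem sq_norm_sum_add_smul (h : HasRieszBounds A B u v) (b : ι₁ → ℝ) (r : ℝ) (j : ι₂) :
    A * (∑ i, b i ^ 2 + r ^ 2) ≤ ‖∑ i, b i • u i + r • v j‖ ^ 2 ∧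
      ‖∑ i, b i • u i + r • v j‖ ^ 2 ≤ B * (∑ i, b i ^ 2 + r ^ 2) := by
  classical
  simpa [Pi.single_apply, ite_smul] using h b (Pi.single j r)

theorem of_coeff_bounds {κ₁ κ₂ : Type*} [Fintype κ₁] [Fintype κ₂] {M N : ℝ}
    (h : HasRieszBounds A B u v) (hA : 0 ≤ A) (hB : 0 ≤ B) (hM : 0 < M)
    (u' : κ₁ → V) (v' : κ₂ → V)
    (hcoeff : ∀ (c₁ : κ₁ → ℝ) (c₂ : κ₂ → ℝ), ∃ (d₁ : ι₁ → ℝ) (d₂ : ι₂ → ℝ),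
      (∑ i, c₁ i • u' i) + ∑ j, c₂ j • v' j = (∑ i, d₁ i • u i) + ∑ j, d₂ j • v j ∧
      ∑ i, c₁ i ^ 2 + ∑ j, c₂ j ^ 2 ≤ M * (∑ i, d₁ i ^ 2 + ∑ j, d₂ j ^ 2) ∧
      ∑ i, d₁ i ^ 2 + ∑ j, d₂ j ^ 2 ≤ N * (∑ i, c₁ i ^ 2 + ∑ j, c₂ j ^ 2)) :
    HasRieszBounds (A / M) (B * N) u' v' := by
  intro c₁ c₂
  obtain ⟨d₁, d₂, hx, hcd, hdc⟩ := hcoeff c₁ c₂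
  obtain ⟨hl, hu⟩ := h d₁ d₂
  rw [hx]
  constructor
  · calc A / M * (∑ i, c₁ i ^ 2 + ∑ j, c₂ j ^ 2)
        ≤ A / M * (M * (∑ i, d₁ i ^ 2 + ∑ j, d₂ j ^ 2)) := by gcongr
      _ = A * (∑ i, d₁ i ^ 2 + ∑ j, d₂ j ^ 2) := by field_simp
      _ ≤ _ := hl
  · calc _ ≤ B * (∑ i, d₁ i ^ 2 + ∑ j, d₂ j ^ 2) := hu
      _ ≤ B * (N * (∑ i, c₁ i ^ 2 + ∑ j, c₂ j ^ 2)) := by gcongr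
      _ = B * N * (∑ i, c₁ i ^ 2 + ∑ j, c₂ j ^ 2) := by ring

theorem of_triangular {K Q τ : ℝ} (h : HasRieszBounds A B u v) (hA : 0 ≤ A) (hB : 0 ≤ B)
    (hK : 0 ≤ K) (hQ : 0 ≤ Q) (hτ : 0 ≤ τ) {a : ι₁ → ι₂ → ℝ} {s : ι₂ → ℝ} {w : ι₂ → V}
    (hw : ∀ j, w j = ∑ i, a i j • u i + s j • v j) (hs : ∀ j, 1 ≤ Q * s j ^ 2 ∧ s j ^ 2 ≤ τ)
    (ha : ∀ x : ι₂ → ℝ, ∑ i, (∑ j, a i j * x j) ^ 2 ≤ K * ∑ j, x j ^ 2) :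
    HasRieszBounds (A / (2 + (2 * K + 1) * Q)) (B * (2 + 2 * K + τ)) u w := by
  refine h.of_coeff_bounds hA hB (by positivity) u w fun c₁ c₂ => ?_
  set y : ι₁ → ℝ := fun i => ∑ j, a i j * c₂ j
  have hy : ∑ i, y i ^ 2 ≤ K * ∑ j, c₂ j ^ 2 := ha c₂
  have hsc_lower : ∑ j, c₂ j ^ 2 ≤ Q * ∑ j, (s j * c₂ j) ^ 2 := by
    rw [mul_sum]
    exact sum_le_sum fun j _ => by nlinarith [(hs j).1, sq_nonneg (c₂ j)]
  have hsc_upper : ∑ j, (s j * c₂ j) ^ 2 ≤ τ * ∑ j, c₂ j ^ 2 := by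
    rw [mul_sum]
    exact sum_le_sum fun j _ => by nlinarith [(hs j).2, sq_nonneg (c₂ j)]
  have hc₁ : ∑ i, c₁ i ^ 2 ≤ 2 * ∑ i, (c₁ i + y i) ^ 2 + 2 * ∑ i, y i ^ 2 := by
    simpa [neg_sq] using sum_sq_add_le (fun i => c₁ i + y i) (fun i => -y i)
  have hd₁ := sum_sq_add_le c₁ y
  refine ⟨fun i => c₁ i + y i, fun j => s j * c₂ j, ?_, ?_, ?_⟩
  · simp only [hw, smul_add, smul_sum, smul_smul, sum_add_distrib, add_smul, sum_smul, y]
    rw [sum_comm (f := fun j i => (c₂ j * a i j) • u i)]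
    simp only [mul_comm, add_assoc]
  · show _ ≤ _ * (∑ i, (c₁ i + y i) ^ 2 + ∑ j, (s j * c₂ j) ^ 2)
    have hd₁_nonneg : 0 ≤ ∑ i, (c₁ i + y i) ^ 2 := sum_nonneg fun i _ => sq_nonneg _
    have hd₂_nonneg : 0 ≤ ∑ j, (s j * c₂ j) ^ 2 := sum_nonneg fun j _ => sq_nonneg _
    nlinarith [mul_le_mul_of_nonneg_left hsc_lower (by linarith : 0 ≤ 2 * K + 1),
      mul_nonneg (mul_nonneg (by linarith : 0 ≤ 2 * K + 1) hQ) hd₁_nonneg]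
  · show _ + _ ≤ _
    have hc₁_nonneg : 0 ≤ ∑ i, c₁ i ^ 2 := sum_nonneg fun i _ => sq_nonneg (c₁ i)
    have hc₂_nonneg : 0 ≤ ∑ j, c₂ j ^ 2 := sum_nonneg fun j _ => sq_nonneg (c₂ j)
    nlinarith [mul_nonneg (by linarith : 0 ≤ 2 * K + τ) hc₁_nonneg]

theorem normalize_triangular {κ : ℝ} {k : ℕ} (h : HasRieszBounds A B u v) (hA : 0 < A)
    (hB : 0 ≤ B) (hκ : 0 ≤ κ) {e : ι₁ → ι₂ → ℝ} {r : ι₂ → ℝ} {φ : ι₂ → V}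
    (hφ : ∀ j, φ j = ∑ i, e i j • u i + r j • v j) (hr : ∀ j, r j ≠ 0)
    (he : ∀ j, ∑ i, e i j ^ 2 ≤ κ * r j ^ 2) (hrow : ∀ i, #{j | e i j ≠ 0} ≤ k) :
    HasRieszBounds (A / (2 + (2 * (k * (κ / A)) + 1) * (B * (1 + κ))))
      (B * (2 + 2 * (k * (κ / A)) + A⁻¹)) u (fun j => ‖φ j‖⁻¹ • φ j) := by
  have hnorm : ∀ j, A * r j ^ 2 ≤ ‖φ j‖ ^ 2 ∧ ‖φ j‖ ^ 2 ≤ B * (1 + κ) * r j ^ 2 := by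
    intro j
    obtain ⟨hl, hu⟩ := hφ j ▸ h.sq_norm_sum_add_smul (fun i => e i j) (r j) j
    have hr_sq : 0 ≤ r j ^ 2 := sq_nonneg _
    constructor <;> nlinarith [he j, sum_nonneg fun i (_ : i ∈ univ) => sq_nonneg (e i j)]
  have hpos : ∀ j, 0 < ‖φ j‖ ^ 2 := fun j =>
    (mul_pos hA (sq_pos_of_ne_zero (hr j))).trans_le (hnorm j).1
  refine h.of_triangular hA.le hB (by positivity) (by positivity) (by positivity)
    (a := fun i j => e i j / ‖φ j‖) (s := fun j => r j / ‖φ j‖) (fun j => ?_) (fun j => ?_)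
    (sum_sq_sum_mul_le_of_sparse (fun i => ?_) (fun j => ?_))
  · rw [hφ j, smul_add, smul_sum, smul_smul]
    simp_rw [smul_smul, div_eq_inv_mul]
  · rw [div_pow]
    constructor
    · rw [mul_div_assoc', le_div_iff₀ (hpos j)]
      linarith [(hnorm j).2]
    · rw [div_le_iff₀ (hpos j), le_inv_mul_iff₀ hA]
      exact (hnorm j).1
  · exact (card_le_card (monotone_filter_right _ fun j _ hj => left_ne_zero_of_mul hj)).trans
      (hrow i)
  · simp_rw [div_pow, ← sum_div]
    rw [div_le_div_iff₀ (hpos j) hA]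
    nlinarith [he j, (hnorm j).1]

theorem normalize_sparse_change {C : ℝ} {k : ℕ} {Φ₁ : ι₁ → V} {Φ₂ Ψ : ι₂ → V}
    {S : ι₂ → Finset ι₁} {t : ι₂ → ι₁ → ℝ}
    (h : HasRieszBounds A B (fun i => ‖Φ₁ i‖⁻¹ • Φ₁ i) (fun j => ‖Φ₂ j‖⁻¹ • Φ₂ j))
    (hA : 0 < A) (hB : 0 ≤ B) (hΦ₁ : ∀ i, Φ₁ i ≠ 0) (hΦ₂ : ∀ j, Φ₂ j ≠ 0)
    (ht : ∀ j, ∀ i ∈ S j, |t j i| * ‖Φ₁ i‖ ≤ C * ‖Φ₂ j‖) (hS : ∀ j, #(S j) ≤ k)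
    (hT : ∀ i, {j | i ∈ S j}.ncard ≤ k) (hΨ : ∀ j, Ψ j = Φ₂ j + ∑ i ∈ S j, t j i • Φ₁ i) :
    HasRieszBounds (A / (2 + (2 * (k * (k * C ^ 2 / A)) + 1) * (B * (1 + k * C ^ 2))))
      (B * (2 + 2 * (k * (k * C ^ 2 / A)) + A⁻¹))
      (fun i => ‖Φ₁ i‖⁻¹ • Φ₁ i) (fun j => ‖Ψ j‖⁻¹ • Ψ j) := by
  classical
  have hΦ₂_norm : ∀ j, ‖Φ₂ j‖ ≠ 0 := fun j => norm_ne_zero_iff.mpr (hΦ₂ j)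
  refine h.normalize_triangular hA hB (by positivity)
    (e := fun i j => if i ∈ S j then t j i * ‖Φ₁ i‖ else 0) (r := fun j => ‖Φ₂ j‖)
    (fun j => ?_) hΦ₂_norm (fun j => ?_) (fun i => ?_)
  · rw [hΨ j, add_comm, smul_smul, mul_inv_cancel₀ (hΦ₂_norm j), one_smul]
    simp [ite_smul, sum_ite_mem, smul_smul, hΦ₁]
  · calc ∑ i, (if i ∈ S j then t j i * ‖Φ₁ i‖ else 0) ^ 2
        = ∑ i ∈ S j, (|t j i| * ‖Φ₁ i‖) ^ 2 := by simp [ite_pow, sum_ite_mem, mul_pow]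
      _ ≤ ∑ i ∈ S j, (C * ‖Φ₂ j‖) ^ 2 :=
          sum_le_sum fun i hi => pow_le_pow_left₀ (by positivity) (ht j i hi) 2
      _ = #(S j) * C ^ 2 * ‖Φ₂ j‖ ^ 2 := by rw [sum_const, nsmul_eq_mul, mul_pow, mul_assoc]
      _ ≤ k * C ^ 2 * ‖Φ₂ j‖ ^ 2 := by gcongr; exact_mod_cast hS j
  · calc #{j | (if i ∈ S j then t j i * ‖Φ₁ i‖ else 0) ≠ 0} ≤ #{j | i ∈ S j} :=
          card_le_card (monotone_filter_right _ fun j _ hj => by_contra fun hi => hj (if_neg hi))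
      _ = {j | i ∈ S j}.ncard := by rw [Set.ncard_eq_toFinset_card', Set.toFinset_ofPred]
      _ ≤ k := hT i

end HasRieszBounds

end RieszBounds

theorem stmt_16_general (A B C : ℝ) (k : ℕ) (hA : 0 < A) (hAB : A ≤ B) :
    ∃ A' B' : ℝ, 0 < A' ∧ A' ≤ B' ∧
      ∀ (V : Type) (_ : NormedAddCommGroup V), ∀ (_ : InnerProductSpace ℝ V),
        FiniteDimensional ℝ V →
      ∀ (ι₁ ι₂ : Type) (_ : Fintype ι₁) (_ : Fintype ι₂),
      ∀ (Φ₁ : ι₁ → V) (Φ₂ : ι₂ → V),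
        (∀ i, Φ₁ i ≠ 0) → (∀ j, Φ₂ j ≠ 0) →
        -- Φ₁ ∪ Φ₂ is a normalized Riesz system with constants A ≤ B
        (∀ (c₁ : ι₁ → ℝ) (c₂ : ι₂ → ℝ),
          A * (∑ i, (c₁ i) ^ 2 + ∑ j, (c₂ j) ^ 2) ≤
            ‖(∑ i, c₁ i • (‖Φ₁ i‖⁻¹ • Φ₁ i)) + ∑ j, c₂ j • (‖Φ₂ j‖⁻¹ • Φ₂ j)‖ ^ 2 ∧
          ‖(∑ i, c₁ i • (‖Φ₁ i‖⁻¹ • Φ₁ i)) + ∑ j, c₂ j • (‖Φ₂ j‖⁻¹ • Φ₂ j)‖ ^ 2 ≤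
            B * (∑ i, (c₁ i) ^ 2 + ∑ j, (c₂ j) ^ 2)) →
      ∀ (S : ι₂ → Finset ι₁) (t : ι₂ → ι₁ → ℝ),
        -- coefficient bound, sparsity of the triangular change of basis
        (∀ j, ∀ i ∈ S j, |t j i| * ‖Φ₁ i‖ ≤ C * ‖Φ₂ j‖) →
        (∀ j, (S j).card ≤ k) →
        (∀ i : ι₁, {j : ι₂ | i ∈ S j}.ncard ≤ k) →
      ∀ (Φ₂hat : ι₂ → V),
        (∀ j, Φ₂hat j = Φ₂ j + ∑ i ∈ S j, t j i • Φ₁ i) →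
        (∀ j, Φ₂hat j ≠ 0) →
        -- then Φ₁ ∪ Φ̂₂ is a normalized Riesz system with constants A' ≤ B'
        ∀ (c₁ : ι₁ → ℝ) (c₂ : ι₂ → ℝ),
          A' * (∑ i, (c₁ i) ^ 2 + ∑ j, (c₂ j) ^ 2) ≤
            ‖(∑ i, c₁ i • (‖Φ₁ i‖⁻¹ • Φ₁ i)) + ∑ j, c₂ j • (‖Φ₂hat j‖⁻¹ • Φ₂hat j)‖ ^ 2 ∧
          ‖(∑ i, c₁ i • (‖Φ₁ i‖⁻¹ • Φ₁ i)) + ∑ j, c₂ j • (‖Φ₂hat j‖⁻¹ • Φ₂hat j)‖ ^ 2 ≤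
            B' * (∑ i, (c₁ i) ^ 2 + ∑ j, (c₂ j) ^ 2) := by
  have hB : 0 ≤ B := hA.le.trans hAB
  set K : ℝ := k * (k * C ^ 2 / A)
  set Q : ℝ := B * (1 + k * C ^ 2)
  have hK : 0 ≤ K := mul_nonneg k.cast_nonneg (div_nonneg (by positivity) hA.le)
  have hQ : 0 ≤ Q := mul_nonneg hB (by positivity)
  have hM : 1 ≤ 2 + (2 * K + 1) * Q := by nlinarith
  refine ⟨A / (2 + (2 * K + 1) * Q), B * (2 + 2 * K + A⁻¹), div_pos hA (by linarith), ?_, ?_⟩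
  · calc A / (2 + (2 * K + 1) * Q) ≤ A := div_le_self hA.le hM
      _ ≤ B := hAB
      _ ≤ B * (2 + 2 * K + A⁻¹) := le_mul_of_one_le_right hB (by linarith [inv_pos.mpr hA])
  · intro V _ _ _ ι₁ ι₂ _ _ Φ₁ Φ₂ hΦ₁ hΦ₂ hR S t ht hS hT Φ₂hat hΦ₂hat _
    exact HasRieszBounds.normalize_sparse_change hR hA hB hΦ₁ hΦ₂ ht hS hT hΦ₂hat

theorem stmt_16 (A B C : ℝ) (k : ℕ) (hA : 0 < A) (hAB : A ≤ B) (hC : 0 ≤ C) :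
    ∃ A' B' : ℝ, 0 < A' ∧ A' ≤ B' ∧
      ∀ (V : Type) (_ : NormedAddCommGroup V), ∀ (_ : InnerProductSpace ℝ V),
        FiniteDimensional ℝ V →
      ∀ (ι₁ ι₂ : Type) (_ : Fintype ι₁) (_ : Fintype ι₂),
      ∀ (Φ₁ : ι₁ → V) (Φ₂ : ι₂ → V),
        (∀ i, Φ₁ i ≠ 0) → (∀ j, Φ₂ j ≠ 0) →
        -- Φ₁ ∪ Φ₂ is a normalized Riesz system with constants A ≤ B
        (∀ (c₁ : ι₁ → ℝ) (c₂ : ι₂ → ℝ),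
          A * (∑ i, (c₁ i) ^ 2 + ∑ j, (c₂ j) ^ 2) ≤
            ‖(∑ i, c₁ i • (‖Φ₁ i‖⁻¹ • Φ₁ i)) + ∑ j, c₂ j • (‖Φ₂ j‖⁻¹ • Φ₂ j)‖ ^ 2 ∧
          ‖(∑ i, c₁ i • (‖Φ₁ i‖⁻¹ • Φ₁ i)) + ∑ j, c₂ j • (‖Φ₂ j‖⁻¹ • Φ₂ j)‖ ^ 2 ≤
            B * (∑ i, (c₁ i) ^ 2 + ∑ j, (c₂ j) ^ 2)) →
      ∀ (S : ι₂ → Finset ι₁) (t : ι₂ → ι₁ → ℝ),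
        -- coefficient bound, sparsity of the triangular change of basis
        (∀ j, ∀ i ∈ S j, |t j i| * ‖Φ₁ i‖ ≤ C * ‖Φ₂ j‖) →
        (∀ j, (S j).card ≤ k) →
        (∀ i : ι₁, {j : ι₂ | i ∈ S j}.ncard ≤ k) →
      ∀ (Φ₂hat : ι₂ → V),
        (∀ j, Φ₂hat j = Φ₂ j + ∑ i ∈ S j, t j i • Φ₁ i) →
        (∀ j, Φ₂hat j ≠ 0) →
        -- then Φ₁ ∪ Φ̂₂ is a normalized Riesz system with constants A' ≤ B'
        ∀ (c₁ : ι₁ → ℝ) (c₂ : ι₂ → ℝ),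
          A' * (∑ i, (c₁ i) ^ 2 + ∑ j, (c₂ j) ^ 2) ≤
            ‖(∑ i, c₁ i • (‖Φ₁ i‖⁻¹ • Φ₁ i)) + ∑ j, c₂ j • (‖Φ₂hat j‖⁻¹ • Φ₂hat j)‖ ^ 2 ∧
          ‖(∑ i, c₁ i • (‖Φ₁ i‖⁻¹ • Φ₁ i)) + ∑ j, c₂ j • (‖Φ₂hat j‖⁻¹ • Φ₂hat j)‖ ^ 2 ≤
            B' * (∑ i, (c₁ i) ^ 2 + ∑ j, (c₂ j) ^ 2) :=
  stmt_16_general A B C k hA hAB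
end
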